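/- Let M be a monoid, W its unit group, and e an idempotent commuting with every element of the form considered. For u, v ∈ W, if the cosets u W_*(e) and v W_*(e) lie in the same W(e)-orbit under the conjugation action, then the elements u·e and v·e of M are conjugate by a unit of M. -/

import Mathlib

/-- `W_*(e) = {w ∈ Mˣ | w e = e w = e}` as a subgroup of the unit group. -/
def rightStab (M : Type*) [Monoid M] (e : M) : Subgroup Mˣ where
  carrier := {w : Mˣ | (w : M) * e = e ∧ e * (w : M) = e}
  one_mem' := by simp
  mul_mem' := by
    rintro a b ⟨ha1, ha2⟩ ⟨hb1, hb2⟩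
    constructor
    · show ((a * b : Mˣ) : M) * e = e
      rw [Units.val_mul, mul_assoc, hb1, ha1]
    · show e * ((a * b : Mˣ) : M) = e
      rw [Units.val_mul, ← mul_assoc, ha2, hb2]
  inv_mem' := by
    rintro a ⟨h1, h2⟩
    constructor
    · show ((a⁻¹ : Mˣ) : M) * e = e
      calc ((a⁻¹ : Mˣ) : M) * e = ((a⁻¹ : Mˣ) : M) * ((a : M) * e) := by rw [h1]
        _ = (((a⁻¹ * a : Mˣ)) : M) * e := by rw [Units.val_mul, mul_assoc]
        _ = e := by simp
    · show e * ((a⁻¹ : Mˣ) : M) = e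
      calc e * ((a⁻¹ : Mˣ) : M) = (e * (a : M)) * ((a⁻¹ : Mˣ) : M) := by rw [h2]
        _ = e * (((a * a⁻¹ : Mˣ)) : M) := by rw [Units.val_mul, mul_assoc]
        _ = e := by simp

/-- `W(e) = {w ∈ Mˣ | w e = e w}` as a subgroup of the unit group. -/
def commStab (M : Type*) [Monoid M] (e : M) : Subgroup Mˣ where
  carrier := {w : Mˣ | (w : M) * e = e * (w : M)}
  one_mem' := by simp
  mul_mem' := by
    intro a b ha hb
    show ((a * b : Mˣ) : M) * e = e * ((a * b : Mˣ) : M)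
    rw [Units.val_mul, mul_assoc, hb, ← mul_assoc, ha, mul_assoc]
  inv_mem' := by
    intro a ha
    show ((a⁻¹ : Mˣ) : M) * e = e * ((a⁻¹ : Mˣ) : M)
    calc ((a⁻¹ : Mˣ) : M) * e
        = ((a⁻¹ : Mˣ) : M) * e * ((a : M) * ((a⁻¹ : Mˣ) : M)) := by
          rw [← Units.val_mul, mul_inv_cancel]; simp
      _ = ((a⁻¹ : Mˣ) : M) * ((e * (a : M)) * ((a⁻¹ : Mˣ) : M)) := by
          simp [mul_assoc]
      _ = ((a⁻¹ : Mˣ) : M) * (((a : M) * e) * ((a⁻¹ : Mˣ) : M)) := by rw [ha]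
      _ = (((a⁻¹ * a : Mˣ) : M)) * (e * ((a⁻¹ : Mˣ) : M)) := by
          rw [Units.val_mul]; simp [mul_assoc]
      _ = e * ((a⁻¹ : Mˣ) : M) := by simp

theorem val_mul_eq_of_mk_eq_mk {M : Type*} [Monoid M] {e : M} {s t : Mˣ}
    (h : (QuotientGroup.mk s : Mˣ ⧸ rightStab M e) = QuotientGroup.mk t) :
    (s : M) * e = t * e := by
  have hst : ((s⁻¹ * t : Mˣ) : M) * e = e := (QuotientGroup.eq.mp h).1
  calc (s : M) * e = s * (((s⁻¹ * t : Mˣ) : M) * e) := by rw [hst]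
    _ = t * e := by rw [← mul_assoc, ← Units.val_mul, mul_inv_cancel_left]

theorem val_conj_mul_of_mem_commStab {M : Type*} [Monoid M] {e : M} {w : Mˣ}
    (hw : w ∈ commStab M e) (u : Mˣ) :
    ((w * u * w⁻¹ : Mˣ) : M) * e = w * ((u : M) * e) * ↑w⁻¹ := by
  have hw' : ((w⁻¹ : Mˣ) : M) * e = e * ↑w⁻¹ := (commStab M e).inv_mem hw
  simp only [Units.val_mul, mul_assoc, hw']

theorem conj_of_cosets_in_same_orbit_general (M : Type*) [Monoid M] (e : M)
    (u v : Mˣ)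
    (h : ∃ w ∈ commStab M e,
      (QuotientGroup.mk (w * u * w⁻¹) : Mˣ ⧸ rightStab M e) = QuotientGroup.mk v) :
    ∃ g : Mˣ, (v : M) * e = ↑g * ((u : M) * e) * ↑g⁻¹ := by
  obtain ⟨w, hw, hq⟩ := h
  exact ⟨w, by rw [← val_mul_eq_of_mk_eq_mk hq, val_conj_mul_of_mem_commStab hw]⟩

/-- If the cosets `u W_*(e)` and `v W_*(e)` lie in the same `W(e)`-orbit under the
conjugation action, then `u e` and `v e` are conjugate by a unit of `M`. -/
theorem conj_of_cosets_in_same_orbit (M : Type*) [Monoid M] (e : M)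
    (he : e * e = e) (u v : Mˣ)
    (h : ∃ w ∈ commStab M e,
      (QuotientGroup.mk (w * u * w⁻¹) : Mˣ ⧸ rightStab M e) = QuotientGroup.mk v) :
    ∃ g : Mˣ, (v : M) * e = ↑g * ((u : M) * e) * ↑g⁻¹ :=
  conj_of_cosets_in_same_orbit_general M e u v h
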